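/- Intertwining property of the adiabatic propagator: let P(t) be a C¹ family of orthogonal projections and U_a(t) the propagator generated by H_a(t) = P(t) H(t) P(t) + iε [∂_t P(t), P(t)] via iε ∂_t U_a(t) = H_a(t) U_a(t), U_a(0) = 1 (with H(t) = H(t)* bounded, say). Then U_a(t) P(0) = P(t) U_a(t) for all t. -/

import Mathlib

/-!
Let `D(t) = U(t) P(0) - P(t) U(t)`, so `D(0) = 0`. Differentiating `P² = P` gives
`Ṗ P + P Ṗ = Ṗ`, hence `P Ṗ P = 0`, and from this `[H_a, P] = iε Ṗ`: the term `P H P`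
commutes with `P`, while `[Ṗ P - P Ṗ, P] = Ṗ`. With this commutator the Leibniz rule turns
`iε U̇ = H_a U` into the linear equation `iε Ḋ = H_a D`, and uniqueness for linear ODEs with
continuous coefficients forces `D ≡ 0`.
-/

section Ring

variable {R : Type*} [Ring R] {p p' : R}

theorem IsIdempotentElem.mul_mul_self_eq_zero (hp : IsIdempotentElem p)
    (hp' : p' * p + p * p' = p') : p * p' * p = 0 := by
  have h : p * p' * p = p * p' * p + p * p' * p := by
    conv_lhs => rw [← hp']
    rw [mul_add, add_mul, ← mul_assoc, mul_assoc _ p p, hp.eq, ← mul_assoc, hp.eq]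
  simpa using h

theorem IsIdempotentElem.lie_mul_mul_self (hp : IsIdempotentElem p) (h : R) :
    ⁅p * h * p, p⁆ = 0 := by
  rw [Ring.lie_def, sub_eq_zero, mul_assoc, hp.eq, ← mul_assoc, ← mul_assoc, hp.eq]

theorem IsIdempotentElem.lie_mul_sub_mul_self (hp : IsIdempotentElem p)
    (hp' : p' * p + p * p' = p') : ⁅p' * p - p * p', p⁆ = p' := by
  have h0 := hp.mul_mul_self_eq_zero hp'
  rw [Ring.lie_def, sub_mul, mul_sub, mul_assoc, hp.eq, h0, ← mul_assoc, h0, ← mul_assoc, hp.eq,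
    sub_zero, zero_sub, sub_neg_eq_add, hp']

variable {S : Type*} [Monoid S] [DistribMulAction S R] [IsScalarTower S R R] [SMulCommClass S R R]

theorem IsIdempotentElem.lie_adiabatic (hp : IsIdempotentElem p)
    (hp' : p' * p + p * p' = p') (h : R) (c : S) :
    ⁅p * h * p + c • (p' * p - p * p'), p⁆ = c • p' := by
  calc _ = ⁅p * h * p, p⁆ + c • ⁅p' * p - p * p', p⁆ := by
        simp only [Ring.lie_def]
        rw [add_mul, mul_add, smul_mul_assoc, mul_smul_comm, smul_sub]
        abel
    _ = c • p' := by rw [hp.lie_mul_mul_self, hp.lie_mul_sub_mul_self hp', zero_add]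

theorem smul_mul_sub_add_eq_mul_sub {u u' a q : R} {c : S} (hu : c • u' = a * u)
    (ha : ⁅a, p⁆ = c • p') :
    c • (u' * q - (p' * u + p * u')) = a * (u * q - p * u) := by
  rw [smul_sub, smul_add, ← smul_mul_assoc, ← smul_mul_assoc, ← mul_smul_comm, hu, ← ha,
    Ring.lie_def]
  noncomm_ring

end Ring

open Set

theorem HasDerivAt.mul_add_mul_eq_self_of_isIdempotentElem {𝕜 𝔸 : Type*}
    [NontriviallyNormedField 𝕜] [NormedRing 𝔸] [NormedAlgebra 𝕜 𝔸] {P : 𝕜 → 𝔸} {p' : 𝔸} {t : 𝕜}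
    (hP : ∀ s, IsIdempotentElem (P s)) (h : HasDerivAt P p' t) : p' * P t + P t * p' = p' := by
  have hPP : HasDerivAt (fun s => P s * P s) (p' * P t + P t * p') t := h.mul h
  simp only [fun s => (hP s).eq] at hPP
  exact hPP.unique h

theorem eq_zero_of_hasDerivAt_eq_mul {𝔸 : Type*} [NormedRing 𝔸] [NormedSpace ℝ 𝔸]
    {B X : ℝ → 𝔸} {t₀ : ℝ} (hB : Continuous B) (hX : ∀ t, HasDerivAt X (B t * X t) t)
    (h₀ : X t₀ = 0) : X = 0 := by
  ext t
  obtain ⟨a, b, ht, ht₀⟩ : ∃ a b, t ∈ Ioo a b ∧ t₀ ∈ Ioo a b :=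
    ⟨min t t₀ - 1, max t t₀ + 1, by grind, by grind⟩
  obtain ⟨C, hC⟩ := isCompact_Icc.exists_bound_of_continuousOn (hB.continuousOn (s := Icc a b))
  have hLip : ∀ s ∈ Ioo a b, LipschitzOnWith C.toNNReal (B s * ·) univ := by
    refine fun s hs => (LipschitzWith.of_dist_le_mul fun x y => ?_).lipschitzOnWith
    calc dist (B s * x) (B s * y) = ‖B s * (x - y)‖ := by rw [dist_eq_norm, mul_sub]
      _ ≤ ‖B s‖ * dist x y := by rw [dist_eq_norm]; exact norm_mul_le _ _
      _ ≤ C.toNNReal * dist x y := by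
        gcongr; exact (hC s (Ioo_subset_Icc_self hs)).trans (le_max_left _ _)
  exact ODE_solution_unique_of_mem_Ioo hLip ht₀ (fun s _ => ⟨hX s, mem_univ _⟩)
    (fun s _ => ⟨by simp, mem_univ _⟩) h₀ ht

theorem adiabatic_propagator_intertwines_general
    {H : Type*} [NormedAddCommGroup H] [InnerProductSpace ℂ H] [CompleteSpace H]
    (ε : ℝ) (hε : 0 < ε)
    (Hm : ℝ → H →L[ℂ] H)
    (hHcont : Continuous Hm)
    (P P' : ℝ → H →L[ℂ] H)
    (hPderiv : ∀ t, HasDerivAt P (P' t) t)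
    (hP'cont : Continuous P')
    (hidem : ∀ t, P t ∘L P t = P t)
    (Ha : ℝ → H →L[ℂ] H)
    (hHa : ∀ t, Ha t = P t ∘L Hm t ∘L P t
      + (Complex.I * (ε : ℂ)) • (P' t ∘L P t - P t ∘L P' t))
    (Ua Ua' : ℝ → H →L[ℂ] H)
    (hUaderiv : ∀ t, HasDerivAt Ua (Ua' t) t)
    (hUaeq : ∀ t, (Complex.I * (ε : ℂ)) • Ua' t = Ha t ∘L Ua t)
    (hUa0 : Ua 0 = 1) :
    ∀ t : ℝ, Ua t ∘L P 0 = P t ∘L Ua t := by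
  set c : ℂ := Complex.I * (ε : ℂ)
  have hc : c ≠ 0 := mul_ne_zero Complex.I_ne_zero (by exact_mod_cast hε.ne')
  have hPidem : ∀ t, IsIdempotentElem (P t) := hidem
  have hPcont : Continuous P := continuous_iff_continuousAt.2 fun t => (hPderiv t).continuousAt
  have hHacont : Continuous Ha := by
    rw [funext hHa]; fun_prop
  have hcomm : ∀ t, ⁅Ha t, P t⁆ = c • P' t := fun t => by
    rw [hHa t]
    exact (hPidem t).lie_adiabatic
      ((hPderiv t).mul_add_mul_eq_self_of_isIdempotentElem hPidem) (Hm t) c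
  have hD : ∀ t, HasDerivAt (fun s => Ua s * P 0 - P s * Ua s)
      ((c⁻¹ • Ha t) * (Ua t * P 0 - P t * Ua t)) t := fun t => by
    refine (((hUaderiv t).mul_const (P 0)).sub ((hPderiv t).mul (hUaderiv t))).congr_deriv ?_
    rw [smul_mul_assoc, ← smul_mul_sub_add_eq_mul_sub (hUaeq t) (hcomm t), inv_smul_smul₀ hc]
  have hD0 : Ua 0 * P 0 - P 0 * Ua 0 = 0 := by simp [hUa0]
  intro t
  exact sub_eq_zero.1 (congrFun (eq_zero_of_hasDerivAt_eq_mul (hHacont.const_smul c⁻¹) hD hD0) t)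

/-- Intertwining property of the adiabatic propagator: if `U_a` solves
`iε ∂ₜU_a = H_a(t) U_a`, `U_a(0) = 1`, with the adiabatic Hamiltonian
`H_a(t) = P(t) H(t) P(t) + iε [∂ₜP(t), P(t)]` for a `C¹` family of orthogonal
projections `P(t)` and a continuous bounded self-adjoint family `H(t)`, then
`U_a(t) P(0) = P(t) U_a(t)` for all `t`. -/
theorem adiabatic_propagator_intertwines
    {H : Type*} [NormedAddCommGroup H] [InnerProductSpace ℂ H] [CompleteSpace H]
    (ε : ℝ) (hε : 0 < ε)
    (Hm : ℝ → H →L[ℂ] H)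
    (hHcont : Continuous Hm)
    (hHsa : ∀ t, IsSelfAdjoint (Hm t))
    (P P' : ℝ → H →L[ℂ] H)
    (hPderiv : ∀ t, HasDerivAt P (P' t) t)
    (hP'cont : Continuous P')
    (hidem : ∀ t, P t ∘L P t = P t)
    (hPsa : ∀ t, ContinuousLinearMap.adjoint (P t) = P t)
    (Ha : ℝ → H →L[ℂ] H)
    (hHa : ∀ t, Ha t = P t ∘L Hm t ∘L P t
      + (Complex.I * (ε : ℂ)) • (P' t ∘L P t - P t ∘L P' t))
    (Ua Ua' : ℝ → H →L[ℂ] H)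
    (hUaderiv : ∀ t, HasDerivAt Ua (Ua' t) t)
    (hUaeq : ∀ t, (Complex.I * (ε : ℂ)) • Ua' t = Ha t ∘L Ua t)
    (hUa0 : Ua 0 = 1) :
    ∀ t : ℝ, Ua t ∘L P 0 = P t ∘L Ua t :=
  adiabatic_propagator_intertwines_general ε hε Hm hHcont P P' hPderiv hP'cont hidem Ha hHa Ua Ua'
    hUaderiv hUaeq hUa0
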